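/- arXiv:2305.11843 — 2 statements merged into one kernel-verified Lean document; each statement's English description precedes it below -/
import Mathlib

section
/- Let M be a regular n-maniplex with base flag Φ, distinguished generators ρ_0, …, ρ_{n−1} (ρ_i being the unique automorphism with Φρ_i = r_i Φ), and let N be the normal closure of ⟨ρ_{n−1}⟩ in Aut(M). Then M is a canonical Cayley extension if and only if N acts regularly (freely and transitively) on the set of facets of M. -/
/-! ## Basic notions: maniplexes, premaniplexes, orbits, automorphisms -/

/-- One monodromy step using an index satisfying `P`. -/
def StepOn {K : Type*} {n : ℕ} (r : Fin n → K → K) (P : Fin n → Prop) (x y : K) : Prop :=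
  ∃ i, P i ∧ r i x = y

/-- `y` is reachable from `x` by monodromies whose index satisfies `P`;
this is the orbit relation of the subgroup generated by those monodromies. -/
def ReachOn {K : Type*} {n : ℕ} (r : Fin n → K → K) (P : Fin n → Prop) : K → K → Prop :=
  Relation.ReflTransGen (StepOn r P)

/-- Orbit relation of the full monodromy group. -/
def ConnRel {K : Type*} {n : ℕ} (r : Fin n → K → K) : K → K → Prop :=
  ReachOn r fun _ => True

/-- Same facet: orbit relation of `r_0, …, r_{n-2}`. -/
def FacetRel {K : Type*} {n : ℕ} (r : Fin n → K → K) : K → K → Prop :=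
  ReachOn r fun i => (i : ℕ) + 1 < n

/-- Same vertex: orbit relation of `r_1, …, r_{n-1}`. -/
def VertexRel {K : Type*} {n : ℕ} (r : Fin n → K → K) : K → K → Prop :=
  ReachOn r fun i => 1 ≤ (i : ℕ)

/-- An `n`-maniplex on the flag set `K`, given by its monodromies `r_0, …, r_{n-1}`. -/
structure IsManiplex {K : Type*} (n : ℕ) (r : Fin n → K → K) : Prop where
  nonempty : Nonempty K
  invol : ∀ i, Function.Involutive (r i)
  fixfree : ∀ (i : Fin n) (x : K), r i x ≠ x
  fixfree₂ : ∀ (i j : Fin n), i ≠ j → ∀ x : K, r i (r j x) ≠ x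
  sq : ∀ (i j : Fin n), 2 ≤ |(i : ℤ) - (j : ℤ)| → ∀ x : K, r i (r j (r i (r j x))) = x
  conn : ∀ x y : K, ConnRel r x y

/-- A premaniplex of rank `n` (fixed points allowed, connectivity not required). -/
structure IsPremaniplex {K : Type*} (n : ℕ) (r : Fin n → K → K) : Prop where
  invol : ∀ i, Function.Involutive (r i)
  sq : ∀ (i j : Fin n), 2 ≤ |(i : ℤ) - (j : ℤ)| → ∀ x : K, r i (r j (r i (r j x))) = x

/-- The automorphism group: permutations of the flags commuting with every monodromy. -/
def autGroup {K : Type*} {n : ℕ} (r : Fin n → K → K) : Subgroup (Equiv.Perm K) where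
  carrier := {τ : Equiv.Perm K | ∀ (i : Fin n) (x : K), τ (r i x) = r i (τ x)}
  one_mem' := by intro i x; rfl
  mul_mem' := by
    intro a b ha hb i x
    simp only [Set.mem_setOf_eq] at ha hb ⊢
    simp only [Equiv.Perm.mul_apply]
    rw [hb i x, ha i (b x)]
  inv_mem' := by
    intro a ha i x
    simp only [Set.mem_setOf_eq] at ha ⊢
    have h := ha i (a⁻¹ x)
    rw [show a (a⁻¹ x) = x from by simp] at h
    rw [← h]
    simp

/-- A pre-extender: an involutory permutation `rn` of the flags of the `n`-maniplex `(K, r)`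
commuting with `r_0, …, r_{n-2}`. -/
structure IsPreExtender {K : Type*} {n : ℕ} (r : Fin n → K → K) (rn : K → K) : Prop where
  maniplex : IsManiplex n r
  rn_invol : Function.Involutive rn
  rn_comm : ∀ i : Fin n, (i : ℕ) + 1 < n → ∀ x : K, rn (r i x) = r i (rn x)

/-- A Cayley extender `(K, rn, ξ)` with voltage group `G`; the voltage is encoded as a
function on flags which is constant on facets. -/
structure IsCayleyExtender {K : Type*} {G : Type*} [Group G] {n : ℕ}
    (r : Fin n → K → K) (rn : K → K) (ξ : K → G) : Prop where
  maniplex : IsManiplex n r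
  rn_invol : Function.Involutive rn
  rn_comm : ∀ i : Fin n, (i : ℕ) + 1 < n → ∀ x : K, rn (r i x) = r i (rn x)
  const : ∀ Φ Ψ : K, FacetRel r Φ Ψ → ξ Φ = ξ Ψ
  voltage_inv : ∀ Φ : K, ξ (rn Φ) = (ξ Φ)⁻¹

/-- A Cayley coextender `(K, r_{-1}, ξ')` with voltage group `G'`; the voltage is encoded as
a function on flags which is constant on vertices. -/
structure IsCayleyCoextender {K : Type*} {G' : Type*} [Group G'] {n : ℕ}
    (r : Fin n → K → K) (rm : K → K) (ξ' : K → G') : Prop where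
  maniplex : IsManiplex n r
  rm_invol : Function.Involutive rm
  rm_comm : ∀ i : Fin n, 1 ≤ (i : ℕ) → ∀ x : K, rm (r i x) = r i (rm x)
  const : ∀ Φ Ψ : K, VertexRel r Φ Ψ → ξ' Φ = ξ' Ψ
  voltage_inv : ∀ Φ : K, ξ' (rm Φ) = (ξ' Φ)⁻¹

/-- Monodromies of the derived graph `K_{rn}^ξ` on flag set `K × G`. -/
def derivedMono {K : Type*} {G : Type*} [Group G] {n : ℕ}
    (r : Fin n → K → K) (rn : K → K) (ξ : K → G) : Fin (n + 1) → K × G → K × G :=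
  fun i p =>
    if h : (i : ℕ) < n then (r ⟨(i : ℕ), h⟩ p.1, p.2) else (rn p.1, ξ p.1 * p.2)

/-- Monodromies of the derived graph `K_{r_{-1}}^{ξ'}` of a coextender, on flag set `K × G'`. -/
def coderivedMono {K : Type*} {G' : Type*} [Group G'] {n : ℕ}
    (r : Fin n → K → K) (rm : K → K) (ξ' : K → G') : Fin (n + 1) → K × G' → K × G' :=
  fun i p =>
    if _h : (i : ℕ) = 0 then (rm p.1, ξ' p.1 * p.2)
    else (r ⟨(i : ℕ) - 1, by have := i.isLt; omega⟩ p.1, p.2)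

/-- Monodromies of the flat amalgamation, on flag set `K × G' × G`. -/
def amalgMono {K : Type*} {G' : Type*} {G : Type*} [Group G'] [Group G] {n : ℕ}
    (r : Fin n → K → K) (rm : K → K) (rn : K → K) (ξ' : K → G') (ξ : K → G) :
    Fin (n + 2) → K × G' × G → K × G' × G :=
  fun i p =>
    if _h0 : (i : ℕ) = 0 then (rm p.1, ξ' p.1 * p.2.1, p.2.2)
    else if _hn : (i : ℕ) = n + 1 then (rn p.1, p.2.1, ξ p.1 * p.2.2)
    else (r ⟨(i : ℕ) - 1, by have := i.isLt; omega⟩ p.1, p.2.1, p.2.2)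

/-- The path intersection property characterizing flag graphs of polytopes. -/
def IsPolytopal {K : Type*} {m : ℕ} (t : Fin m → K → K) : Prop :=
  ∀ (x y : K) (k l : ℕ), k ≤ l → l < m →
    ReachOn t (fun i => k ≤ (i : ℕ)) x y →
    ReachOn t (fun i => (i : ℕ) ≤ l) x y →
    ReachOn t (fun i => k ≤ (i : ℕ) ∧ (i : ℕ) ≤ l) x y

/-- `S` is an `(rn, rn')`-friendly set: for every flag `Φ` and `τ ∈ S` there is `σ ∈ S`
with `rn'(Φτ) = (rn Φ)σ` (automorphisms act on the right, i.e. by function application). -/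
def FriendlySet {K : Type*} (rn rn' : K → K) (S : Set (Equiv.Perm K)) : Prop :=
  ∀ Φ : K, ∀ τ ∈ S, ∃ σ ∈ S, rn' (τ Φ) = σ (rn Φ)

/-- `♥(K, rn)`: the union of all `rn`-friendly subsets of `Aut(K)`. -/
def heartSet {K : Type*} {n : ℕ} (r : Fin n → K → K) (rn : K → K) : Set (Equiv.Perm K) :=
  ⋃₀ {S : Set (Equiv.Perm K) | S ⊆ ↑(autGroup r) ∧ FriendlySet rn rn S}

/-- Relations of the universal voltage group `G(K, rn)`: one generator per flag, generators of
flags in the same facet are identified, and `α_F · α_{rn F} = 1`. -/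
def UnivRels {K : Type*} {n : ℕ} (r : Fin n → K → K) (rn : K → K) : Set (FreeGroup K) :=
  {w | ∃ Φ Ψ : K, FacetRel r Φ Ψ ∧ w = FreeGroup.of Φ * (FreeGroup.of Ψ)⁻¹} ∪
    {w | ∃ Φ : K, w = FreeGroup.of Φ * FreeGroup.of (rn Φ)}

/-- The universal voltage assignment `Φ ↦ α_{F_Φ}` into `G(K, rn)`. -/
def univVoltage {K : Type*} {n : ℕ} (r : Fin n → K → K) (rn : K → K) :
    K → PresentedGroup (UnivRels r rn) :=
  fun Φ => PresentedGroup.of Φ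

/-- Automorphisms map reachability relations to themselves. -/
lemma aut_map_reach {K : Type*} {n : ℕ} {r : Fin n → K → K} {τ : Equiv.Perm K}
    (hτ : τ ∈ autGroup r) {P : Fin n → Prop} {x y : K} (h : ReachOn r P x y) :
    ReachOn r P (τ x) (τ y) := by
  induction h with
  | refl => exact Relation.ReflTransGen.refl
  | tail _ hstep ih =>
    obtain ⟨i, hi, hri⟩ := hstep
    exact ih.tail ⟨i, hi, by rw [← hτ i, hri]⟩

/-- Automorphisms of a connected premaniplex are determined by the image of one flag. -/
lemma aut_rigid {K : Type*} {n : ℕ} {r : Fin n → K → K}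
    (hconn : ∀ x y : K, ConnRel r x y)
    {σ τ : Equiv.Perm K} (hσ : σ ∈ autGroup r) (hτ : τ ∈ autGroup r)
    {x : K} (h : σ x = τ x) : σ = τ := by
  refine Equiv.ext fun y => ?_
  induction hconn x y with
  | refl => exact h
  | tail _ hstep ih =>
    obtain ⟨i, -, hri⟩ := hstep
    rw [← hri, hσ i, hτ i, ih]

/-- A regular maniplex (of rank `n+1`) is a canonical Cayley extension iff
the normal closure of the distinguished generator `ρ_n` in `Aut(M)` acts regularly on its
facets. -/
theorem statement3 {M : Type*} {n : ℕ} (r : Fin (n + 1) → M → M)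
    (hM : IsManiplex (n + 1) r)
    (hreg : ∀ x y : M, ∃ τ ∈ autGroup r, τ x = y)
    (Φ : M) (ρ : Fin (n + 1) → Equiv.Perm M)
    (hρmem : ∀ i, ρ i ∈ autGroup r)
    (hρ : ∀ i, ρ i Φ = r i Φ) :
    (∃ H : Subgroup (Equiv.Perm M),
        (H : Set (Equiv.Perm M)) ⊆ ↑(autGroup r) ∧
        (∀ Ψ₁ Ψ₂ : M, ∃ τ ∈ H, FacetRel r (τ Ψ₁) Ψ₂) ∧
        (∀ τ ∈ H, (∃ Ψ : M, FacetRel r Ψ (τ Ψ)) → τ = 1) ∧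
        (∀ Ψ : M, ∃ τ ∈ H, r (Fin.last n) Ψ = τ Ψ)) ↔
      ((∀ Ψ₁ Ψ₂ : M,
          ∃ τ ∈ Subgroup.normalClosure
              ({⟨ρ (Fin.last n), hρmem (Fin.last n)⟩} : Set ↥(autGroup r)),
            FacetRel r (τ.val Ψ₁) Ψ₂) ∧
        (∀ τ ∈ Subgroup.normalClosure
            ({⟨ρ (Fin.last n), hρmem (Fin.last n)⟩} : Set ↥(autGroup r)),
          (∃ Ψ : M, FacetRel r Ψ (τ.val Ψ)) → τ = 1)) := by
  set A := autGroup r with hA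
  set ρn : ↥A := ⟨ρ (Fin.last n), hρmem (Fin.last n)⟩ with hρn
  set N := Subgroup.normalClosure ({ρn} : Set ↥A) with hN
  -- every flag admits an element of N realizing r_n (canonical property, unconditional)
  have hcan : ∀ Ψ : M, ∃ τ ∈ N, r (Fin.last n) Ψ = τ.val Ψ := by
    intro Ψ
    obtain ⟨σ, hσ, hσΦ⟩ := hreg Φ Ψ
    refine ⟨⟨σ, hσ⟩ * ρn * ⟨σ, hσ⟩⁻¹, ?_, ?_⟩
    · exact Subgroup.normalClosure_normal.conj_mem _
        (Subgroup.subset_normalClosure (Set.mem_singleton _)) _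
    · show r (Fin.last n) Ψ = σ (ρ (Fin.last n) (σ⁻¹ Ψ))
      rw [← hσΦ, Equiv.Perm.coe_inv, Equiv.symm_apply_apply, hρ, hσ]
  -- N acts transitively on facets (unconditional)
  have htrans : ∀ Ψ₁ Ψ₂ : M, ∃ τ ∈ N, FacetRel r (τ.val Ψ₁) Ψ₂ := by
    intro Ψ₁ Ψ₂
    induction hM.conn Ψ₁ Ψ₂ with
    | refl => exact ⟨1, one_mem _, Relation.ReflTransGen.refl⟩
    | @tail b c _ hstep ih =>
      obtain ⟨τ, hτN, hτfac⟩ := ih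
      obtain ⟨i, -, hri⟩ := hstep
      by_cases hi : (i : ℕ) < n
      · exact ⟨τ, hτN, hτfac.tail ⟨i, by omega, hri⟩⟩
      · have hil : i = Fin.last n := Fin.ext (by have := i.isLt; simp [Fin.last]; omega)
        obtain ⟨σ, hσN, hσ⟩ := hcan b
        refine ⟨σ * τ, mul_mem hσN hτN, ?_⟩
        subst hil
        rw [hσ] at hri
        have h2 : FacetRel r (σ.val (τ.val Ψ₁)) (σ.val b) := aut_map_reach σ.2 hτfac
        rw [hri] at h2
        exact h2
  constructor
  · rintro ⟨H, hHsub, -, hfree, hcanH⟩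
    refine ⟨htrans, ?_⟩
    have hNle : N ≤ Subgroup.comap A.subtype H := by
      rw [hN, Subgroup.normalClosure]
      refine (Subgroup.closure_le _).2 ?_
      intro x hx
      rw [Group.mem_conjugatesOfSet_iff] at hx
      obtain ⟨a, ha, hconj⟩ := hx
      rw [Set.mem_singleton_iff] at ha
      subst ha
      obtain ⟨c, hc⟩ := isConj_iff.mp hconj
      obtain ⟨τ, hτH, hτ⟩ := hcanH (c.val Φ)
      have hxval : x.val = τ := by
        refine aut_rigid hM.conn x.2 (hHsub hτH) (x := c.val Φ) ?_
        rw [← hτ, ← hc]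
        show c.val (ρ (Fin.last n) (c.val⁻¹ (c.val Φ))) = _
        rw [Equiv.Perm.coe_inv, Equiv.symm_apply_apply, hρ, c.2]
      show x.val ∈ H
      rw [hxval]; exact hτH
    intro τ hτ hex
    have h1 : τ.val ∈ H := hNle hτ
    have := hfree τ.val h1 hex
    exact Subtype.ext this
  · rintro ⟨htr, hfr⟩
    refine ⟨N.map A.subtype, ?_, ?_, ?_, ?_⟩
    · rintro x hx
      obtain ⟨y, -, rfl⟩ := Subgroup.mem_map.mp hx
      exact y.2
    · intro Ψ₁ Ψ₂
      obtain ⟨τ, hτ, h⟩ := htr Ψ₁ Ψ₂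
      exact ⟨τ.val, Subgroup.mem_map.mpr ⟨τ, hτ, rfl⟩, h⟩
    · intro τ hτ hex
      obtain ⟨τ', hτ', rfl⟩ := Subgroup.mem_map.mp hτ
      have := hfr τ' hτ' hex
      rw [this]; rfl
    · intro Ψ
      obtain ⟨τ, hτ, h⟩ := hcan Ψ
      exact ⟨τ.val, Subgroup.mem_map.mpr ⟨τ, hτ, rfl⟩, h⟩
end

section
/- Let (K, r_n, ξ) be a Cayley extender with voltage group G whose derived graph K_{r_n}^ξ is an (n+1)-maniplex, and let A = Aut(K_{r_n}^ξ). For τ ∈ A and γ ∈ G define τ_γ : K → K by letting Φτ_γ be the first coordinate of (Φ, γ)τ, and set S_τ = {τ_γ : γ ∈ G}. Then each τ_γ is an automorphism of K, the union S = ⋃_{τ ∈ A} S_τ is a subgroup of Aut(K), and the map τ ↦ τ_1 is a group isomorphism from the stabilizer in A of the base facet K × {1} (as a set) onto S. -/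
theorem Equiv.Perm.apply_inv_self {α : Type*} (f : Equiv.Perm α) (x : α) : f (f⁻¹ x) = x :=
  Equiv.apply_symm_apply f x

theorem Equiv.Perm.inv_apply_self {α : Type*} (f : Equiv.Perm α) (x : α) : f⁻¹ (f x) = x :=
  Equiv.symm_apply_apply f x

section AuxS13

variable {K G : Type*} [Group G] {n : ℕ}

private lemma s13_comm (r : Fin n → K → K) (rn : K → K) (ξ : K → G)
    {τ : Equiv.Perm (K × G)} (hτ : τ ∈ autGroup (derivedMono r rn ξ))
    (j : Fin n) (Φ : K) (g : G) :
    τ (r j Φ, g) = (r j (τ (Φ, g)).1, (τ (Φ, g)).2) := by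
  have h := hτ ⟨(j : ℕ), Nat.lt_succ_of_lt j.isLt⟩ (Φ, g)
  simpa [derivedMono, j.isLt] using h

private lemma s13_snd (r : Fin n → K → K) (rn : K → K) (ξ : K → G)
    {τ : Equiv.Perm (K × G)} (hτ : τ ∈ autGroup (derivedMono r rn ξ))
    (γ : G) {Φ Ψ : K} (h : ConnRel r Φ Ψ) :
    (τ (Φ, γ)).2 = (τ (Ψ, γ)).2 := by
  induction h with
  | refl => rfl
  | tail _ hstep ih =>
    obtain ⟨j, -, rfl⟩ := hstep
    rw [ih, s13_comm r rn ξ hτ j _ γ]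

private lemma s13_bij (r : Fin n → K → K) (rn : K → K) (ξ : K → G)
    {τ : Equiv.Perm (K × G)} (hτ : τ ∈ autGroup (derivedMono r rn ξ))
    (hconn : ∀ x y : K, ConnRel r x y) (γ : G) :
    Function.Bijective (fun Φ : K => (τ (Φ, γ)).1) := by
  constructor
  · intro Φ Ψ h
    have h1 : (τ (Φ, γ)).1 = (τ (Ψ, γ)).1 := h
    have h2 := s13_snd r rn ξ hτ γ (hconn Φ Ψ)
    have h3 : τ (Φ, γ) = τ (Ψ, γ) := Prod.ext h1 h2
    exact congrArg Prod.fst (τ.injective h3)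
  · intro Ψ
    have hinv : τ⁻¹ ∈ autGroup (derivedMono r rn ξ) := inv_mem hτ
    set c := (τ (Ψ, γ)).2 with hc
    have h1 : (τ⁻¹ ((τ (Ψ, γ)).1, c)).2 = γ := by
      rw [hc, show (((τ (Ψ, γ)).1, (τ (Ψ, γ)).2) : K × G) = τ (Ψ, γ) from rfl,
        Equiv.Perm.inv_apply_self]
    have h2 : (τ⁻¹ (Ψ, c)).2 = γ := by
      rw [s13_snd r rn ξ hinv c (hconn Ψ (τ (Ψ, γ)).1), h1]
    refine ⟨(τ⁻¹ (Ψ, c)).1, ?_⟩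
    show (τ ((τ⁻¹ (Ψ, c)).1, γ)).1 = Ψ
    rw [← h2, show ((((τ⁻¹ (Ψ, c)).1, (τ⁻¹ (Ψ, c)).2)) : K × G) = τ⁻¹ (Ψ, c) from rfl,
      Equiv.Perm.apply_inv_self]

private def s13_transR (K : Type*) {G : Type*} [Group G] (γ : G) : Equiv.Perm (K × G) where
  toFun p := (p.1, p.2 * γ)
  invFun p := (p.1, p.2 * γ⁻¹)
  left_inv p := by simp
  right_inv p := by simp

private lemma s13_transR_mem (r : Fin n → K → K) (rn : K → K) (ξ : K → G) (γ : G) :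
    s13_transR K γ ∈ autGroup (derivedMono r rn ξ) := by
  intro i p
  by_cases h : (i : ℕ) < n
  · simp [derivedMono, h, s13_transR]
  · simp [derivedMono, h, s13_transR, mul_assoc]

private lemma s13_rho (r : Fin n → K → K) (rn : K → K) (ξ : K → G)
    (hconn : ∀ x y : K, ConnRel r x y) [Nonempty K]
    {τ : Equiv.Perm (K × G)} (hτ : τ ∈ autGroup (derivedMono r rn ξ)) (γ : G) :
    ∃ ρ ∈ autGroup (derivedMono r rn ξ), ∀ Φ : K, ρ (Φ, (1 : G)) = ((τ (Φ, γ)).1, 1) := by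
  obtain ⟨Φ₀⟩ := ‹Nonempty K›
  set c := (τ (Φ₀, γ)).2 with hc
  refine ⟨s13_transR K c⁻¹ * τ * s13_transR K γ, ?_, ?_⟩
  · exact mul_mem (mul_mem (s13_transR_mem r rn ξ c⁻¹) hτ) (s13_transR_mem r rn ξ γ)
  · intro Φ
    show s13_transR K c⁻¹ (τ (s13_transR K γ (Φ, 1))) = _
    have h1 : s13_transR K γ ((Φ, (1 : G))) = (Φ, γ) := by simp [s13_transR]
    rw [h1]
    have h2 : τ (Φ, γ) = ((τ (Φ, γ)).1, c) :=
      Prod.ext rfl (s13_snd r rn ξ hτ γ (hconn Φ Φ₀))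
    rw [h2]
    simp [s13_transR]

private lemma s13_det (r : Fin n → K → K) (rn : K → K) (ξ : K → G)
    {τ τ' : Equiv.Perm (K × G)}
    (hτ : τ ∈ autGroup (derivedMono r rn ξ)) (hτ' : τ' ∈ autGroup (derivedMono r rn ξ))
    {p q : K × G} (hpq : ConnRel (derivedMono r rn ξ) p q) (h : τ p = τ' p) : τ q = τ' q := by
  induction hpq with
  | refl => exact h
  | tail _ hstep ih =>
    obtain ⟨i, -, rfl⟩ := hstep
    rw [hτ i _, hτ' i _, ih]

end AuxS13

/-- For `A = Aut(K_{r_n}^ξ)`, each map `τ_γ : Φ ↦ ((Φ,γ)τ)_1` is an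
automorphism of `K`; the union `S = ⋃_{τ ∈ A} S_τ` is a subgroup of `Aut(K)`; and `τ ↦ τ_1`
is a group isomorphism from the setwise stabilizer in `A` of the base facet `K × {1}`
onto `S`. -/
theorem statement13 {K G : Type*} [Group G] {n : ℕ}
    (r : Fin n → K → K) (rn : K → K) (ξ : K → G)
    (hext : IsCayleyExtender r rn ξ)
    (hman : IsManiplex (n + 1) (derivedMono r rn ξ)) :
    (∀ τ ∈ autGroup (derivedMono r rn ξ), ∀ γ : G,
        Function.Bijective (fun Φ : K => (τ (Φ, γ)).1) ∧
        ∀ (i : Fin n) (Φ : K), (τ (r i Φ, γ)).1 = r i ((τ (Φ, γ)).1)) ∧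
      ∃ S : Subgroup (Equiv.Perm K),
        (S : Set (Equiv.Perm K)) =
            {σ : Equiv.Perm K |
              ∃ τ ∈ autGroup (derivedMono r rn ξ), ∃ γ : G, ∀ Φ : K, σ Φ = (τ (Φ, γ)).1} ∧
        (S : Set (Equiv.Perm K)) ⊆ ↑(autGroup r) ∧
        ∃ St : Subgroup (Equiv.Perm (K × G)),
          (St : Set (Equiv.Perm (K × G))) =
              {τ : Equiv.Perm (K × G) | τ ∈ autGroup (derivedMono r rn ξ) ∧
                (⇑τ) '' {p : K × G | p.2 = 1} = {p : K × G | p.2 = 1}} ∧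
          ∃ e : ↥St ≃* ↥S,
            ∀ (τ : ↥St) (Φ : K), (e τ).val Φ = (τ.val (Φ, (1 : G))).1 := by
  classical
  have hconn := hext.maniplex.conn
  haveI hK : Nonempty K := hext.maniplex.nonempty
  refine ⟨fun τ hτ γ => ⟨s13_bij r rn ξ hτ hconn γ,
      fun i Φ => congrArg Prod.fst (s13_comm r rn ξ hτ i Φ γ)⟩, ?_⟩
  let Sgrp : Subgroup (Equiv.Perm K) :=
    { carrier := {σ : Equiv.Perm K |
        ∃ τ ∈ autGroup (derivedMono r rn ξ), ∃ γ : G, ∀ Φ : K, σ Φ = (τ (Φ, γ)).1}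
      one_mem' := ⟨1, one_mem _, 1, fun Φ => rfl⟩
      mul_mem' := by
        rintro σ σ' ⟨τ, hτ, γ, hστ⟩ ⟨τ', hτ', γ', hστ'⟩
        obtain ⟨Φ₀⟩ := hK
        set δ : G := ((τ' (Φ₀, γ')).2)⁻¹ * γ with hδ
        refine ⟨τ * s13_transR K δ * τ',
          mul_mem (mul_mem hτ (s13_transR_mem r rn ξ δ)) hτ', γ', fun Φ => ?_⟩
        have e1 : τ' (Φ, γ') = (σ' Φ, (τ' (Φ₀, γ')).2) :=
          Prod.ext (hστ' Φ).symm (s13_snd r rn ξ hτ' γ' (hconn Φ Φ₀))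
        show σ (σ' Φ) = (τ (s13_transR K δ (τ' (Φ, γ')))).1
        rw [e1]
        show σ (σ' Φ) = (τ (σ' Φ, (τ' (Φ₀, γ')).2 * δ)).1
        rw [hδ, mul_inv_cancel_left]
        exact hστ (σ' Φ)
      inv_mem' := by
        rintro σ ⟨τ, hτ, γ, hστ⟩
        obtain ⟨ρ, hρ, hρ1⟩ := s13_rho r rn ξ hconn hτ γ
        refine ⟨ρ⁻¹, inv_mem hρ, 1, fun Φ => ?_⟩
        have h1 : ρ (σ⁻¹ Φ, 1) = (Φ, 1) := by
          rw [hρ1 (σ⁻¹ Φ), ← hστ (σ⁻¹ Φ), Equiv.Perm.apply_inv_self]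
        have h2 : ρ⁻¹ (Φ, 1) = (σ⁻¹ Φ, 1) := by rw [← h1, Equiv.Perm.inv_apply_self]
        show σ⁻¹ Φ = (ρ⁻¹ (Φ, (1 : G))).1
        rw [h2] }
  refine ⟨Sgrp, rfl, ?_, ?_⟩
  · rintro σ ⟨τ, hτ, γ, hστ⟩
    intro i Φ
    rw [hστ (r i Φ), hστ Φ]
    exact congrArg Prod.fst (s13_comm r rn ξ hτ i Φ γ)
  · let Stgrp : Subgroup (Equiv.Perm (K × G)) :=
      { carrier := {τ : Equiv.Perm (K × G) | τ ∈ autGroup (derivedMono r rn ξ) ∧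
          (⇑τ) '' {p : K × G | p.2 = 1} = {p : K × G | p.2 = 1}}
        one_mem' := ⟨one_mem _, by simp⟩
        mul_mem' := by
          rintro a b ⟨haA, haB⟩ ⟨hbA, hbB⟩
          exact ⟨mul_mem haA hbA, by rw [Equiv.Perm.coe_mul, Set.image_comp, hbB, haB]⟩
        inv_mem' := by
          rintro a ⟨haA, haB⟩
          refine ⟨inv_mem haA, ?_⟩
          conv_lhs => rw [← haB]
          rw [← Set.image_comp]
          have hid : (⇑a⁻¹ ∘ ⇑a) = id := by funext x; simp
          rw [hid, Set.image_id] }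
    have Φ₀ : K := Classical.arbitrary K
    have hsnd : ∀ (b : Equiv.Perm (K × G)),
        (⇑b) '' {p : K × G | p.2 = 1} = {p : K × G | p.2 = 1} →
        ∀ Φ : K, (b (Φ, (1 : G))).2 = 1 := by
      intro b hb Φ
      have hmem : b (Φ, 1) ∈ (⇑b) '' {p : K × G | p.2 = 1} := ⟨(Φ, 1), rfl, rfl⟩
      rw [hb] at hmem
      exact hmem
    refine ⟨Stgrp, rfl, ?_⟩
    have hmemSt : ∀ τ : ↥Stgrp, τ.val ∈ autGroup (derivedMono r rn ξ) ∧
        (⇑τ.val) '' {p : K × G | p.2 = 1} = {p : K × G | p.2 = 1} := fun τ => τ.2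
    refine ⟨MulEquiv.ofBijective
      (MonoidHom.mk' (fun τ : ↥Stgrp =>
        (⟨Equiv.ofBijective (fun Φ : K => (τ.val (Φ, 1)).1)
          (s13_bij r rn ξ (hmemSt τ).1 hconn 1),
          τ.1, (hmemSt τ).1, 1, fun Φ => rfl⟩ : ↥Sgrp)) ?hmul) ⟨?hinj, ?hsurj⟩,
      fun τ Φ => rfl⟩
    case hmul =>
      intro a b
      apply Subtype.ext
      apply Equiv.ext
      intro Φ
      show ((a.val * b.val) (Φ, 1)).1 = (a.val ((b.val (Φ, 1)).1, 1)).1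
      rw [Equiv.Perm.mul_apply]
      have e2 : b.val (Φ, (1 : G)) = ((b.val (Φ, 1)).1, 1) :=
        Prod.ext rfl (hsnd b.val (hmemSt b).2 Φ)
      rw [← e2]
    case hinj =>
      intro a b hab
      have h1 : ∀ Φ : K, (a.val (Φ, (1 : G))).1 = (b.val (Φ, 1)).1 := fun Φ =>
        DFunLike.congr_fun (congrArg Subtype.val hab) Φ
      have h2 : a.val (Φ₀, (1 : G)) = b.val (Φ₀, 1) :=
        Prod.ext (h1 Φ₀) (by rw [hsnd a.val (hmemSt a).2 Φ₀, hsnd b.val (hmemSt b).2 Φ₀])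
      apply Subtype.ext
      apply Equiv.ext
      intro p
      exact s13_det r rn ξ (hmemSt a).1 (hmemSt b).1 (hman.conn (Φ₀, 1) p) h2
    case hsurj =>
      rintro ⟨σ, hσ⟩
      obtain ⟨τ, hτ, γ, hστ⟩ := hσ
      obtain ⟨ρ, hρ, hρ1⟩ := s13_rho r rn ξ hconn hτ γ
      have himg : (⇑ρ) '' {p : K × G | p.2 = 1} = {p : K × G | p.2 = 1} := by
        ext p
        constructor
        · rintro ⟨⟨Φ, g⟩, hg, rfl⟩
          have hg' : g = 1 := hg
          subst hg'
          rw [hρ1 Φ]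
          rfl
        · intro hp
          obtain ⟨Φ, hΦ⟩ := (s13_bij r rn ξ hτ hconn γ).2 p.1
          refine ⟨(Φ, 1), rfl, ?_⟩
          rw [hρ1 Φ]
          exact Prod.ext hΦ (Eq.symm hp)
      refine ⟨⟨ρ, hρ, himg⟩, ?_⟩
      apply Subtype.ext
      apply Equiv.ext
      intro Φ
      show (ρ (Φ, 1)).1 = σ Φ
      rw [hρ1 Φ, hστ Φ]
end
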